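/- arXiv:1902.04909 — 8 statements merged into one kernel-verified Lean document; each statement's English description precedes it below -/
import Mathlib

section
/- For real numbers $a_1, a_2 > 0$ and integers $n \geq 3$, $0 \leq m \leq n$, define $f_{(n,m)}(x) = \frac{x^n+1}{x^{n-m}+x^m}$. Then $f_{(n,m)}(a_1) = f_{(n,m)}(a_2)$ holds for all such pairs $(n,m)$ if and only if $a_1 = a_2$ or $a_1 a_2 = 1$. -/
/-!
Multiplying numerator and denominator by `x ^ n` shows that every `f_{(n,m)}` is invariant under
`x ↦ x⁻¹`, which gives one direction. Conversely `f_{(3,1)}(x) = x + x⁻¹ - 1`, and on nonzero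
numbers `x + x⁻¹` identifies exactly `x` with `x⁻¹`.
-/

section

variable {K : Type*} [Field K]

theorem pow_add_one_div_pow_add_pow_inv {x : K} (hx : x ≠ 0) {n m : ℕ} (hmn : m ≤ n) :
    (x⁻¹ ^ n + 1) / (x⁻¹ ^ (n - m) + x⁻¹ ^ m) = (x ^ n + 1) / (x ^ (n - m) + x ^ m) := by
  have hxn : x ^ n = x ^ (n - m) * x ^ m := by rw [← pow_add, Nat.sub_add_cancel hmn]
  rw [← mul_div_mul_left _ _ (pow_ne_zero n hx)]
  congr 1
  · rw [mul_add, inv_pow, mul_inv_cancel₀ (pow_ne_zero n hx), mul_one, add_comm]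
  · rw [hxn, inv_pow, inv_pow]
    field_simp
    ring

theorem pow_three_add_one_div_sq_add_self {x : K} (hx : x ≠ 0) (hx₁ : x + 1 ≠ 0) :
    (x ^ 3 + 1) / (x ^ 2 + x) = x + x⁻¹ - 1 := by
  have hden : x ^ 2 + x ≠ 0 := by
    rw [sq, ← mul_add_one]
    exact mul_ne_zero hx hx₁
  field_simp
  ring

theorem add_inv_eq_add_inv_iff {a b : K} (ha : a ≠ 0) (hb : b ≠ 0) :
    a + a⁻¹ = b + b⁻¹ ↔ a = b ∨ a * b = 1 := by
  have hdiff : a + a⁻¹ - (b + b⁻¹) = (a - b) * (a * b - 1) / (a * b) := by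
    field_simp
    ring
  rw [← sub_eq_zero, hdiff, div_eq_zero_iff, mul_eq_zero, sub_eq_zero, sub_eq_zero,
    or_iff_left (mul_ne_zero ha hb)]

end

theorem stmt_0 (a₁ a₂ : ℝ) (h₁ : 0 < a₁) (h₂ : 0 < a₂) :
    (∀ n m : ℕ, 3 ≤ n → m ≤ n →
      (a₁ ^ n + 1) / (a₁ ^ (n - m) + a₁ ^ m) = (a₂ ^ n + 1) / (a₂ ^ (n - m) + a₂ ^ m))
    ↔ (a₁ = a₂ ∨ a₁ * a₂ = 1) := by
  constructor
  · intro h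
    have h31 : (a₁ ^ 3 + 1) / (a₁ ^ 2 + a₁) = (a₂ ^ 3 + 1) / (a₂ ^ 2 + a₂) := by
      simpa using h 3 1 le_rfl (by norm_num)
    rw [pow_three_add_one_div_sq_add_self h₁.ne' (by positivity),
      pow_three_add_one_div_sq_add_self h₂.ne' (by positivity), sub_left_inj] at h31
    exact (add_inv_eq_add_inv_iff h₁.ne' h₂.ne').1 h31
  · rintro (rfl | hprod) n m - hmn
    · rfl
    · rw [eq_inv_of_mul_eq_one_right hprod]
      exact (pow_add_one_div_pow_add_pow_inv h₁.ne' hmn).symm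
end

section
/- Let $0 < m < n$ be integers and $f_{(n,m)}(x) = \frac{x^n+1}{x^{n-m}+x^m}$ for $x > 0$. Then $f_{(n,m)}$ is strictly decreasing on $(0,1)$ and strictly increasing on $(1,\infty)$, and satisfies $f_{(n,m)}(x) = f_{(n,m)}(1/x)$ for all $x > 0$. -/
/-!
Both `x ^ n + 1` and `x ^ (n - m) + x ^ m` are self-reciprocal polynomials of degree `n`, so
their ratio `f` satisfies `f x⁻¹ = f x`. For `0 < a < b`, the cross difference of `f a` and
`f b` factors as `(a^m - b^m)((ab)^k - 1) + (a^k - b^k)((ab)^m - 1)` with `k = n - m`, so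
`f a < f b` as soon as `ab > 1`; this covers `(1, ∞)`, and the symmetry `x ↦ x⁻¹` carries it
over to `(0, 1)`.
-/

def palindromicRatio {K : Type*} [Field K] (n m : ℕ) (x : K) : K :=
  (x ^ n + 1) / (x ^ (n - m) + x ^ m)

theorem palindromicRatio_inv {K : Type*} [Field K] {n m : ℕ} (hmn : m ≤ n) (x : K) :
    palindromicRatio n m x⁻¹ = palindromicRatio n m x := by
  rcases eq_or_ne x 0 with rfl | hx
  · rw [inv_zero]
  obtain ⟨k, rfl⟩ := Nat.exists_eq_add_of_le' hmn
  have hxn : x ^ (k + m) ≠ 0 := pow_ne_zero _ hx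
  unfold palindromicRatio
  rw [Nat.add_sub_cancel, ← mul_div_mul_left _ _ hxn]
  congr 1 <;> simp only [inv_pow] <;> field_simp <;> ring

theorem cross_sub_eq {R : Type*} [CommRing R] (a b : R) (k m : ℕ) :
    (a ^ (k + m) + 1) * (b ^ k + b ^ m) - (b ^ (k + m) + 1) * (a ^ k + a ^ m) =
      (a ^ m - b ^ m) * ((a * b) ^ k - 1) + (a ^ k - b ^ k) * ((a * b) ^ m - 1) := by
  ring

section Order

variable {K : Type*} [Field K] [LinearOrder K] [IsStrictOrderedRing K] {n m : ℕ} {a b : K}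

theorem palindromicRatio_lt_of_one_lt_mul (hm : 0 < m) (hmn : m < n) (ha : 0 < a)
    (hab : a < b) (h1 : 1 < a * b) : palindromicRatio n m a < palindromicRatio n m b := by
  obtain ⟨k, rfl⟩ := Nat.exists_eq_add_of_le' hmn.le
  have hk : k ≠ 0 := by omega
  have hb : 0 < b := ha.trans hab
  unfold palindromicRatio
  rw [Nat.add_sub_cancel, div_lt_div_iff₀ (by positivity) (by positivity)]
  have hm_term : (a ^ m - b ^ m) * ((a * b) ^ k - 1) < 0 :=
    mul_neg_of_neg_of_pos (sub_neg.2 (pow_lt_pow_left₀ hab ha.le hm.ne'))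
      (sub_pos.2 (one_lt_pow₀ h1 hk))
  have hk_term : (a ^ k - b ^ k) * ((a * b) ^ m - 1) < 0 :=
    mul_neg_of_neg_of_pos (sub_neg.2 (pow_lt_pow_left₀ hab ha.le hk))
      (sub_pos.2 (one_lt_pow₀ h1 hm.ne'))
  linarith [cross_sub_eq a b k m]

theorem palindromicRatio_lt_of_mul_lt_one (hm : 0 < m) (hmn : m < n) (ha : 0 < a)
    (hab : a < b) (h1 : a * b < 1) : palindromicRatio n m b < palindromicRatio n m a := by
  have hb : 0 < b := ha.trans hab
  rw [← palindromicRatio_inv hmn.le a, ← palindromicRatio_inv hmn.le b]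
  refine palindromicRatio_lt_of_one_lt_mul hm hmn (inv_pos.2 hb) ((inv_lt_inv₀ hb ha).2 hab) ?_
  rw [← mul_inv_rev]
  exact (one_lt_inv₀ (mul_pos ha hb)).2 h1

theorem strictMonoOn_palindromicRatio (hm : 0 < m) (hmn : m < n) :
    StrictMonoOn (palindromicRatio n m : K → K) (Set.Ioi 1) := fun _ hx _ hy hxy =>
  palindromicRatio_lt_of_one_lt_mul hm hmn (zero_lt_one.trans hx) hxy (one_lt_mul hx.le hy)

theorem strictAntiOn_palindromicRatio (hm : 0 < m) (hmn : m < n) :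
    StrictAntiOn (palindromicRatio n m : K → K) (Set.Ioo 0 1) := fun _ hx _ hy hxy =>
  palindromicRatio_lt_of_mul_lt_one hm hmn hx.1 hxy
    (mul_lt_one_of_nonneg_of_lt_one_left hx.1.le hx.2 hy.2.le)

end Order

theorem stmt_1 (n m : ℕ) (hm : 0 < m) (hmn : m < n) :
    StrictAntiOn (fun x : ℝ => (x ^ n + 1) / (x ^ (n - m) + x ^ m)) (Set.Ioo 0 1) ∧
    StrictMonoOn (fun x : ℝ => (x ^ n + 1) / (x ^ (n - m) + x ^ m)) (Set.Ioi 1) ∧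
    ∀ x : ℝ, 0 < x →
      (x ^ n + 1) / (x ^ (n - m) + x ^ m) =
      ((1 / x) ^ n + 1) / ((1 / x) ^ (n - m) + (1 / x) ^ m) := by
  refine ⟨strictAntiOn_palindromicRatio hm hmn, strictMonoOn_palindromicRatio hm hmn,
    fun x _ => ?_⟩
  simp only [one_div]
  exact (palindromicRatio_inv hmn.le x).symm
end

section
/- Let $a_1, b_1, a_2, b_2 > 0$ and suppose there exists $c > 0$ such that (i) $a_1^2 + b_1^2 + 2 = c(a_2^2 + b_2^2 + 2)$, (ii) $a_1 + b_1 = c(a_2 + b_2)$, and (iii) $1 + a_1 b_1 = c(1 + a_2 b_2)$. Then either $a_1 + b_1 = a_2 + b_2$ or $(a_1+b_1)(a_2+b_2) = 4$. -/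
/-! Only the sums `sᵢ = aᵢ + bᵢ` matter: (i) + 2·(iii) reads `s₁² + 4 = c (s₂² + 4)` and (ii) reads
`s₁ = c s₂`. Eliminating `c` gives `s₂ (s₁² + 4) = s₁ (s₂² + 4)`, i.e. `(s₁ - s₂)(s₁ s₂ - 4) = 0`. -/

theorem eq_or_mul_eq_four_of_sq_add_four_eq {R : Type*} [CommRing R] [NoZeroDivisors R]
    {x y c : R} (hsq : x ^ 2 + 4 = c * (y ^ 2 + 4)) (hlin : x = c * y) :
    x = y ∨ x * y = 4 := by
  have key : (x - y) * (x * y - 4) = 0 := by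
    linear_combination y * hsq - (y ^ 2 + 4) * hlin
  rcases mul_eq_zero.mp key with h | h
  · exact .inl (sub_eq_zero.mp h)
  · exact .inr (sub_eq_zero.mp h)

theorem stmt_2_general (a₁ b₁ a₂ b₂ c : ℝ)
    (h1 : a₁ ^ 2 + b₁ ^ 2 + 2 = c * (a₂ ^ 2 + b₂ ^ 2 + 2))
    (h2 : a₁ + b₁ = c * (a₂ + b₂))
    (h3 : 1 + a₁ * b₁ = c * (1 + a₂ * b₂)) :
    a₁ + b₁ = a₂ + b₂ ∨ (a₁ + b₁) * (a₂ + b₂) = 4 :=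
  eq_or_mul_eq_four_of_sq_add_four_eq (by linear_combination h1 + 2 * h3) h2

theorem stmt_2 (a₁ b₁ a₂ b₂ c : ℝ) (ha₁ : 0 < a₁) (hb₁ : 0 < b₁) (ha₂ : 0 < a₂)
    (hb₂ : 0 < b₂) (hc : 0 < c)
    (h1 : a₁ ^ 2 + b₁ ^ 2 + 2 = c * (a₂ ^ 2 + b₂ ^ 2 + 2))
    (h2 : a₁ + b₁ = c * (a₂ + b₂))
    (h3 : 1 + a₁ * b₁ = c * (1 + a₂ * b₂)) :
    a₁ + b₁ = a₂ + b₂ ∨ (a₁ + b₁) * (a₂ + b₂) = 4 :=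
  stmt_2_general a₁ b₁ a₂ b₂ c h1 h2 h3
end

section
/- Let $c_1, c_2 > 0$ and suppose there exists $\lambda > 0$ such that $1 + 2c_1^2 = \lambda(1 + 2c_2^2)$ and $c_1^2 + 2c_1 = \lambda(c_2^2 + 2c_2)$. Then $c_1 = c_2$ or $c_1(4c_2 - 1) - c_2 - 2 = 0$. -/
theorem stmt_4 (c₁ c₂ : ℝ) (h₁ : 0 < c₁) (h₂ : 0 < c₂)
    (hlam : ∃ l : ℝ, 0 < l ∧ 1 + 2 * c₁ ^ 2 = l * (1 + 2 * c₂ ^ 2) ∧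
      c₁ ^ 2 + 2 * c₁ = l * (c₂ ^ 2 + 2 * c₂)) :
    c₁ = c₂ ∨ c₁ * (4 * c₂ - 1) - c₂ - 2 = 0 := by
  obtain ⟨l, hl, e1, e2⟩ := hlam
  have key : (c₁ - c₂) * (c₁ * (4 * c₂ - 1) - c₂ - 2) = 0 := by
    linear_combination (c₂ ^ 2 + 2 * c₂) * e1 - (1 + 2 * c₂ ^ 2) * e2
  rcases mul_eq_zero.mp key with h | h
  · exact Or.inl (by linarith)
  · exact Or.inr h
end

section
/- Let $\tau > 2$ and $a, b > 0$ satisfy the system $(a+b-\tau)b^2 + \tau b - 2 = 0$ and $(a+b-\tau)a^2 + \tau a - 2 = 0$. Then either $a = b$, or $\tau \geq 4$ and $a + b = \frac{1}{2}(\tau + \sqrt{\tau^2 - 4\tau})$ or $a + b = \frac{1}{2}(\tau - \sqrt{\tau^2 - 4\tau})$. -/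
theorem stmt_7 (τ a b : ℝ) (hτ : 2 < τ) (ha : 0 < a) (hb : 0 < b)
    (h1 : (a + b - τ) * b ^ 2 + τ * b - 2 = 0)
    (h2 : (a + b - τ) * a ^ 2 + τ * a - 2 = 0) :
    a = b ∨ (4 ≤ τ ∧ (a + b = (τ + Real.sqrt (τ ^ 2 - 4 * τ)) / 2 ∨
      a + b = (τ - Real.sqrt (τ ^ 2 - 4 * τ)) / 2)) := by
  by_cases hab : a = b
  · exact Or.inl hab
  · right
    have key : (b - a) * ((a + b) * (a + b - τ) + τ) = 0 := by linear_combination h1 - h2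
    have hba : b - a ≠ 0 := fun h => hab (sub_eq_zero.mp h).symm
    have hs : (a + b) * (a + b - τ) + τ = 0 := by
      rcases mul_eq_zero.mp key with h | h
      · exact absurd h hba
      · exact h
    have hdisc : τ ^ 2 - 4 * τ = (τ - 2 * (a + b)) ^ 2 := by nlinarith [hs]
    have hτ4 : 4 ≤ τ := by nlinarith [sq_nonneg (τ - 2 * (a + b))]
    have hsqrt : Real.sqrt (τ ^ 2 - 4 * τ) = |τ - 2 * (a + b)| := by
      rw [hdisc, Real.sqrt_sq_eq_abs]
    refine ⟨hτ4, ?_⟩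
    rcases le_or_gt (τ - 2 * (a + b)) 0 with h | h
    · left
      rw [hsqrt, abs_of_nonpos h]
      ring
    · right
      rw [hsqrt, abs_of_pos h]
      ring
end

section
/- Let $k \geq 2$, $0 < \theta < 1$, $\tau = \theta + \theta^{-1}$, and let $(u_i)_{i \in \mathbb{Z}}$ be positive reals with $u_0 = 1$ such that all sums $\sum_{j\geq 1}\theta^j u_{i\pm j}^k$ converge. Then there exists $C > 0$ with $u_i = C\left(\sum_{j=1}^{\infty}\theta^j u_{i-j}^k + u_i^k + \sum_{j=1}^{\infty}\theta^j u_{i+j}^k\right)$ for all $i \in \mathbb{Z}$ if and only if $u_i^k = \frac{u_{i-1} + u_{i+1} - \tau u_i}{u_{-1} + u_1 - \tau}$ for all $i \in \mathbb{Z}$ (in particular $u_{-1} + u_1 - \tau \neq 0$ in that case). -/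
open Filter Topology

private lemma aux_tendsto_of_pow {y : ℕ → ℝ} (hy : ∀ n, 0 ≤ y n) {k : ℕ} (hk : k ≠ 0)
    (h : Tendsto (fun n => (y n) ^ k) atTop (𝓝 0)) : Tendsto y atTop (𝓝 0) := by
  have hcont : ContinuousAt (fun t : ℝ => t ^ ((k : ℝ)⁻¹)) 0 :=
    Real.continuousAt_rpow_const 0 _ (Or.inr (by positivity))
  have h2 := (hcont.tendsto.comp h)
  have h0 : (0:ℝ) ^ ((k:ℝ)⁻¹) = 0 := Real.zero_rpow (by positivity)
  rw [h0] at h2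
  refine h2.congr fun n => ?_
  exact Real.pow_rpow_inv_natCast (hy n) hk

private lemma aux_tsum_telescope {f c : ℕ → ℝ} (hf : Summable f)
    (hfc : ∀ n, f n = c n - c (n + 1)) (hc : Tendsto c atTop (𝓝 0)) :
    ∑' n, f n = c 0 := by
  have h1 : Tendsto (fun n => ∑ j ∈ Finset.range n, f j) atTop (𝓝 (c 0)) := by
    have he : ∀ n, ∑ j ∈ Finset.range n, f j = c 0 - c n := by
      intro n
      simp only [hfc]
      exact Finset.sum_range_sub' c n
    simp only [he]
    simpa using tendsto_const_nhds.sub hc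
  exact tendsto_nhds_unique (hf.hasSum.tendsto_sum_nat) h1

private lemma aux_decayL (k : ℕ) (hk : 2 ≤ k) (θ : ℝ) (hθ : 0 < θ) (hθ1 : θ < 1)
    (u : ℤ → ℝ) (hu : ∀ i, 0 < u i)
    (hsumL : ∀ i : ℤ, Summable (fun j : ℕ => θ ^ (j + 1) * (u (i - (j + 1))) ^ k)) (i : ℤ) :
    Tendsto (fun n : ℕ => θ ^ n * u (i - n)) atTop (𝓝 0) := by
  have hz : Tendsto (fun n : ℕ => θ ^ (n + 1) * (u (i + 1 - (n + 1))) ^ k) atTop (𝓝 0) :=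
    (hsumL (i + 1)).tendsto_atTop_zero
  have hz' : Tendsto (fun n : ℕ => θ ^ n * (u (i - n)) ^ k) atTop (𝓝 0) := by
    have := hz.const_mul θ⁻¹
    rw [mul_zero] at this
    refine this.congr fun n => ?_
    have harg : i + 1 - ((n : ℤ) + 1) = i - n := by ring
    rw [harg, pow_succ]
    field_simp
  refine aux_tendsto_of_pow (y := fun n : ℕ => θ ^ n * u (i - n))
    (fun n => by have := hu (i - n); positivity)
    (show k ≠ 0 by omega) ?_
  refine squeeze_zero (f := fun n : ℕ => (θ ^ n * u (i - n)) ^ k)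
    (g := fun n : ℕ => θ ^ n * (u (i - n)) ^ k)
    (fun n => by have := hu (i - n); positivity) ?_ hz'
  intro n
  show (θ ^ n * u (i - n)) ^ k ≤ θ ^ n * (u (i - n)) ^ k
  have hkk : n * (k - 1) + n = n * k := by
    have h1 : k - 1 + 1 = k := by omega
    calc n * (k - 1) + n = n * ((k - 1) + 1) := by ring
    _ = n * k := by rw [h1]
  have : (θ ^ n * u (i - n)) ^ k = θ ^ (n * (k - 1)) * (θ ^ n * (u (i - n)) ^ k) := by
    rw [mul_pow, ← pow_mul, ← mul_assoc, ← pow_add, hkk]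
  rw [this]
  have h1 : θ ^ (n * (k - 1)) ≤ 1 := pow_le_one₀ hθ.le hθ1.le
  nlinarith [pow_pos hθ n, pow_pos (hu (i - n)) k, mul_nonneg (pow_pos hθ n).le (pow_pos (hu (i-n)) k).le]

private lemma aux_decayR (k : ℕ) (hk : 2 ≤ k) (θ : ℝ) (hθ : 0 < θ) (hθ1 : θ < 1)
    (u : ℤ → ℝ) (hu : ∀ i, 0 < u i)
    (hsumR : ∀ i : ℤ, Summable (fun j : ℕ => θ ^ (j + 1) * (u (i + (j + 1))) ^ k)) (i : ℤ) :
    Tendsto (fun n : ℕ => θ ^ n * u (i + n)) atTop (𝓝 0) := by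
  have hz : Tendsto (fun n : ℕ => θ ^ (n + 1) * (u (i - 1 + (n + 1))) ^ k) atTop (𝓝 0) :=
    (hsumR (i - 1)).tendsto_atTop_zero
  have hz' : Tendsto (fun n : ℕ => θ ^ n * (u (i + n)) ^ k) atTop (𝓝 0) := by
    have := hz.const_mul θ⁻¹
    rw [mul_zero] at this
    refine this.congr fun n => ?_
    have harg : i - 1 + ((n : ℤ) + 1) = i + n := by ring
    rw [harg, pow_succ]
    field_simp
  refine aux_tendsto_of_pow (y := fun n : ℕ => θ ^ n * u (i + n))
    (fun n => by have := hu (i + n); positivity)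
    (show k ≠ 0 by omega) ?_
  refine squeeze_zero (f := fun n : ℕ => (θ ^ n * u (i + n)) ^ k)
    (g := fun n : ℕ => θ ^ n * (u (i + n)) ^ k)
    (fun n => by have := hu (i + n); positivity) ?_ hz'
  intro n
  show (θ ^ n * u (i + n)) ^ k ≤ θ ^ n * (u (i + n)) ^ k
  have hkk : n * (k - 1) + n = n * k := by
    have h1 : k - 1 + 1 = k := by omega
    calc n * (k - 1) + n = n * ((k - 1) + 1) := by ring
    _ = n * k := by rw [h1]
  have : (θ ^ n * u (i + n)) ^ k = θ ^ (n * (k - 1)) * (θ ^ n * (u (i + n)) ^ k) := by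
    rw [mul_pow, ← pow_mul, ← mul_assoc, ← pow_add, hkk]
  rw [this]
  have h1 : θ ^ (n * (k - 1)) ≤ 1 := pow_le_one₀ hθ.le hθ1.le
  nlinarith [pow_pos hθ n, pow_pos (hu (i + n)) k, mul_nonneg (pow_pos hθ n).le (pow_pos (hu (i+n)) k).le]

/-- Proposition 1 of the paper: reduction of the boundary law equation to a
three-term recursion. -/
theorem stmt_17 (k : ℕ) (hk : 2 ≤ k) (θ : ℝ) (hθ : 0 < θ) (hθ1 : θ < 1)
    (τ : ℝ) (hτ : τ = θ + θ⁻¹)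
    (u : ℤ → ℝ) (hu : ∀ i, 0 < u i) (hu0 : u 0 = 1)
    (hsumL : ∀ i : ℤ, Summable (fun j : ℕ => θ ^ (j + 1) * (u (i - (j + 1))) ^ k))
    (hsumR : ∀ i : ℤ, Summable (fun j : ℕ => θ ^ (j + 1) * (u (i + (j + 1))) ^ k)) :
    (∃ C : ℝ, 0 < C ∧ ∀ i : ℤ,
      u i = C * ((∑' j : ℕ, θ ^ (j + 1) * (u (i - (j + 1))) ^ k) + (u i) ^ k +
        (∑' j : ℕ, θ ^ (j + 1) * (u (i + (j + 1))) ^ k))) ↔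
    (u (-1) + u 1 - τ ≠ 0 ∧
      ∀ i : ℤ, (u i) ^ k = (u (i - 1) + u (i + 1) - τ * u i) / (u (-1) + u 1 - τ)) := by
  have hθ0 : θ ≠ 0 := ne_of_gt hθ
  have hinv : θ * θ⁻¹ = 1 := mul_inv_cancel₀ hθ0
  have hinvpos : 0 < θ⁻¹ := by positivity
  have htneg : θ - θ⁻¹ < 0 := by nlinarith
  have htne : θ - θ⁻¹ ≠ 0 := ne_of_lt htneg
  constructor
  · -- forward direction
    rintro ⟨C, hC, hCF⟩
    -- shift identities
    have Lshift : ∀ i : ℤ, (∑' j : ℕ, θ ^ (j + 1) * (u (i - (j + 1))) ^ k)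
        = θ * (u (i - 1)) ^ k + θ * ∑' j : ℕ, θ ^ (j + 1) * (u (i - 1 - (j + 1))) ^ k := by
      intro i
      rw [Summable.tsum_eq_zero_add (hsumL i)]
      congr 1
      · norm_num
      · rw [← tsum_mul_left]
        apply tsum_congr
        intro n
        have harg : i - ((n : ℤ) + 1 + 1) = i - 1 - ((n : ℤ) + 1) := by ring
        push_cast
        rw [harg]
        ring
    have Rshift : ∀ i : ℤ, (∑' j : ℕ, θ ^ (j + 1) * (u (i + (j + 1))) ^ k)
        = θ * (u (i + 1)) ^ k + θ * ∑' j : ℕ, θ ^ (j + 1) * (u (i + 1 + (j + 1))) ^ k := by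
      intro i
      rw [Summable.tsum_eq_zero_add (hsumR i)]
      congr 1
      · norm_num
      · rw [← tsum_mul_left]
        apply tsum_congr
        intro n
        have harg : i + ((n : ℤ) + 1 + 1) = i + 1 + ((n : ℤ) + 1) := by ring
        push_cast
        rw [harg]
        ring
    have key : ∀ i : ℤ, θ * (u (i - 1) + u (i + 1)) - (θ ^ 2 + 1) * u i
        = C * (θ ^ 2 - 1) * (u i) ^ k := by
      intro i
      have H1 := hCF (i - 1)
      have H2 := hCF (i + 1)
      have H3 := hCF i
      have e1 := Lshift i
      have e2 := Lshift (i + 1)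
      have e3 := Rshift (i - 1)
      have e4 := Rshift i
      simp only [show i + 1 - 1 = i from by ring, show i - 1 + 1 = i from by ring] at e2 e3
      linear_combination θ * H1 + θ * H2 - (θ ^ 2 + 1) * H3 - C * e1 + C * θ * e2
        + C * θ * e3 - C * e4
    have hD0 : u (-1) + u 1 - τ = C * (θ - θ⁻¹) := by
      have k0 := key 0
      norm_num [hu0] at k0
      rw [hτ]
      linear_combination θ⁻¹ * k0 + (θ + C * θ - u (-1) - u 1) * hinv
    have hDne : u (-1) + u 1 - τ ≠ 0 := by
      rw [hD0]
      exact ne_of_lt (mul_neg_of_pos_of_neg hC htneg)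
    refine ⟨hDne, fun i => ?_⟩
    rw [hD0, hτ, eq_div_iff (ne_of_lt (mul_neg_of_pos_of_neg hC htneg))]
    linear_combination (-θ⁻¹) * key i
      + (u (i - 1) + u (i + 1) - θ * u i - C * θ * (u i) ^ k) * hinv
  · -- backward direction
    rintro ⟨hDne, hrec⟩
    obtain ⟨D, hDdef⟩ : ∃ D : ℝ, u (-1) + u 1 - τ = D := ⟨_, rfl⟩
    simp only [hDdef] at hrec hDne
    have hmul : ∀ i : ℤ, (u i) ^ k * D = u (i - 1) + u (i + 1) - τ * u i := by
      intro i
      rw [hrec i]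
      exact div_mul_cancel₀ _ hDne
    have hLD : ∀ i : ℤ, (∑' j : ℕ, θ ^ (j + 1) * (u (i - (j + 1))) ^ k)
        = (θ * u i - u (i - 1)) / D := by
      intro i
      have hT := aux_tsum_telescope (hsumL i)
        (c := fun n : ℕ => (θ ^ (n + 1) * u (i - n) - θ ^ n * u (i - n - 1)) / D)
        ?_ ?_
      · rw [hT]
        norm_num
      · intro n
        have hm := hmul (i - ((n : ℤ) + 1))
        simp only [show i - ((n : ℤ) + 1) = i - (n : ℤ) - 1 from by ring,
          show i - (n : ℤ) - 1 - 1 = i - (n : ℤ) - 2 from by ring,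
          show i - (n : ℤ) - 1 + 1 = i - (n : ℤ) from by ring, hτ] at hm
        rw [div_sub_div_same, eq_div_iff hDne]
        push_cast
        simp only [show i - ((n : ℤ) + 1) = i - (n : ℤ) - 1 from by ring,
          show i - (n : ℤ) - 1 - 1 = i - (n : ℤ) - 2 from by ring]
        linear_combination θ ^ (n + 1) * hm - θ ^ n * u (i - (n : ℤ) - 1) * hinv
      · have hA := aux_decayL k hk θ hθ hθ1 u hu hsumL i
        have hB := aux_decayL k hk θ hθ hθ1 u hu hsumL (i - 1)
        have hB' : Tendsto (fun n : ℕ => θ ^ n * u (i - n - 1)) atTop (𝓝 0) :=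
          hB.congr fun n => by rw [show i - 1 - (n : ℤ) = i - n - 1 from by ring]
        have h2 := ((hA.const_mul θ).sub hB').div_const D
        simp only [mul_zero, sub_zero, zero_div] at h2
        refine h2.congr fun n => ?_
        rw [pow_succ]
        ring
    have hRD : ∀ i : ℤ, (∑' j : ℕ, θ ^ (j + 1) * (u (i + (j + 1))) ^ k)
        = (θ * u i - u (i + 1)) / D := by
      intro i
      have hT := aux_tsum_telescope (hsumR i)
        (c := fun n : ℕ => (θ ^ (n + 1) * u (i + n) - θ ^ n * u (i + n + 1)) / D)
        ?_ ?_
      · rw [hT]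
        norm_num
      · intro n
        have hm := hmul (i + ((n : ℤ) + 1))
        simp only [show i + ((n : ℤ) + 1) = i + (n : ℤ) + 1 from by ring,
          show i + (n : ℤ) + 1 - 1 = i + (n : ℤ) from by ring,
          show i + (n : ℤ) + 1 + 1 = i + (n : ℤ) + 2 from by ring,
          hτ] at hm
        rw [div_sub_div_same, eq_div_iff hDne]
        push_cast
        simp only [show i + ((n : ℤ) + 1) = i + (n : ℤ) + 1 from by ring,
          show i + (n : ℤ) + 1 + 1 = i + (n : ℤ) + 2 from by ring]
        linear_combination θ ^ (n + 1) * hm - θ ^ n * u (i + (n : ℤ) + 1) * hinv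
      · have hA := aux_decayR k hk θ hθ hθ1 u hu hsumR i
        have hB := aux_decayR k hk θ hθ hθ1 u hu hsumR (i + 1)
        have hB' : Tendsto (fun n : ℕ => θ ^ n * u (i + n + 1)) atTop (𝓝 0) :=
          hB.congr fun n => by rw [show i + 1 + (n : ℤ) = i + n + 1 from by ring]
        have h2 := ((hA.const_mul θ).sub hB').div_const D
        simp only [mul_zero, sub_zero, zero_div] at h2
        refine h2.congr fun n => ?_
        rw [pow_succ]
        ring
    have hFD : ∀ i : ℤ,
        u i = (D / (θ - θ⁻¹)) * ((∑' j : ℕ, θ ^ (j + 1) * (u (i - (j + 1))) ^ k) + (u i) ^ k +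
          (∑' j : ℕ, θ ^ (j + 1) * (u (i + (j + 1))) ^ k)) := by
      intro i
      rw [hLD i, hRD i, hrec i, hτ]
      rw [← add_div, ← add_div,
        show θ * u i - u (i - 1) + (u (i - 1) + u (i + 1) - (θ + θ⁻¹) * u i)
          + (θ * u i - u (i + 1)) = (θ - θ⁻¹) * u i from by ring]
      rw [div_mul_div_comm,
        show D * ((θ - θ⁻¹) * u i) = u i * ((θ - θ⁻¹) * D) from by ring,
        mul_div_assoc, div_self (mul_ne_zero htne hDne), mul_one]
    refine ⟨D / (θ - θ⁻¹), ?_, hFD⟩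
    have h0 := hFD 0
    rw [hu0, one_pow] at h0
    have hL0 : 0 ≤ ∑' j : ℕ, θ ^ (j + 1) * (u ((0:ℤ) - (j + 1))) ^ k :=
      tsum_nonneg fun j => by have := hu ((0:ℤ) - (j + 1)); positivity
    have hR0 : 0 ≤ ∑' j : ℕ, θ ^ (j + 1) * (u ((0:ℤ) + (j + 1))) ^ k :=
      tsum_nonneg fun j => by have := hu ((0:ℤ) + (j + 1)); positivity
    nlinarith [h0, hL0, hR0]
end

section
/- Let $0 < \theta < 1$, $\tau = \theta + \theta^{-1}$, and let $(u_j)_{j \leq 0}$ be positive reals with $u_0 = 1$, $u_{-1} + u_1 - \tau \neq 0$, satisfying $u_j^k(u_{-1}+u_1-\tau) = u_{j-1} + u_{j+1} - \tau u_j$ for all $j \leq -1$, and such that $l_0 := \sum_{j=-\infty}^{-1} \theta^{-j} u_j^k$ converges. Then $l_0 = \frac{\theta - u_{-1}}{u_{-1} + u_1 - \tau}$. -/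
/-- Lemma 2 of the paper: the formula for `l₀`. -/
theorem stmt_18 (k : ℕ) (hk : 2 ≤ k) (θ : ℝ) (hθ : 0 < θ) (hθ1 : θ < 1)
    (τ : ℝ) (hτ : τ = θ + θ⁻¹)
    (u : ℤ → ℝ) (hu : ∀ i, 0 < u i) (hu0 : u 0 = 1)
    (hden : u (-1) + u 1 - τ ≠ 0)
    (hrec : ∀ j : ℤ, j ≤ -1 →
      (u j) ^ k * (u (-1) + u 1 - τ) = u (j - 1) + u (j + 1) - τ * u j)
    (hsum : Summable (fun j : ℕ => θ ^ (j + 1) * (u (-(j + 1 : ℤ))) ^ k)) :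
    (∑' j : ℕ, θ ^ (j + 1) * (u (-(j + 1 : ℤ))) ^ k) =
      (θ - u (-1)) / (u (-1) + u 1 - τ) := by
  set c := u (-1) + u 1 - τ with hc
  set a : ℕ → ℝ := fun j => θ ^ (j + 1) * (u (-(j + 1 : ℤ))) ^ k with ha
  -- a tends to 0
  have ha0 : Filter.Tendsto a Filter.atTop (nhds 0) := hsum.tendsto_atTop_zero
  -- b n = θ^(n+1) * u (-(n+1)) tends to 0
  set b : ℕ → ℝ := fun n => θ ^ (n + 1) * u (-(n + 1 : ℤ)) with hb
  have hbub : ∀ n, b n ≤ θ ^ (n + 1) + a n := by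
    intro n
    rcases le_or_gt (u (-(n + 1 : ℤ))) 1 with h | h
    · have : b n ≤ θ ^ (n + 1) := by
        have := mul_le_mul_of_nonneg_left h (le_of_lt (pow_pos hθ (n + 1)))
        simpa [hb] using this
      have hnn : 0 ≤ a n := by
        have := (hu (-(n + 1 : ℤ))).le
        positivity
      linarith
    · have hle : u (-(n + 1 : ℤ)) ≤ (u (-(n + 1 : ℤ))) ^ k :=
        le_self_pow₀ h.le (by omega)
      have : b n ≤ a n := by
        have := mul_le_mul_of_nonneg_left hle (le_of_lt (pow_pos hθ (n + 1)))
        simpa [hb, ha] using this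
      have : b n ≤ a n := this
      have hnn : (0:ℝ) ≤ θ ^ (n + 1) := (pow_pos hθ (n + 1)).le
      linarith
  have hblb : ∀ n, 0 ≤ b n := by
    intro n
    have := (hu (-(n + 1 : ℤ))).le
    have := (pow_pos hθ (n + 1)).le
    positivity
  have hθpow : Filter.Tendsto (fun n : ℕ => θ ^ (n + 1)) Filter.atTop (nhds 0) := by
    have h := tendsto_pow_atTop_nhds_zero_of_lt_one hθ.le hθ1
    exact h.comp (Filter.tendsto_add_atTop_nat 1)
  have hb0 : Filter.Tendsto b Filter.atTop (nhds 0) := by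
    have hub : Filter.Tendsto (fun n => θ ^ (n + 1) + a n) Filter.atTop (nhds 0) := by
      simpa using hθpow.add ha0
    exact squeeze_zero hblb hbub hub
  -- the telescoping function
  set G : ℕ → ℝ := fun N => θ ^ N * u (-(N + 1 : ℤ)) - θ ^ (N + 1) * u (-(N : ℤ)) with hG
  have hG0 : Filter.Tendsto G Filter.atTop (nhds 0) := by
    have h1 : Filter.Tendsto (fun N : ℕ => θ ^ N * u (-(N + 1 : ℤ))) Filter.atTop (nhds 0) := by
      refine ((hb0.const_mul θ⁻¹).congr fun N => ?_).mono_right (by simp)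
      show θ⁻¹ * (θ ^ (N + 1) * u (-(N + 1 : ℤ))) = θ ^ N * u (-(N + 1 : ℤ))
      rw [pow_succ]
      field_simp
    have h2 : Filter.Tendsto (fun N : ℕ => θ ^ (N + 1) * u (-(N : ℤ))) Filter.atTop (nhds 0) := by
      rw [← Filter.tendsto_add_atTop_iff_nat 1]
      refine ((hb0.const_mul θ).congr fun n => ?_).mono_right (by simp)
      show θ * (θ ^ (n + 1) * u (-(n + 1 : ℤ))) = θ ^ (n + 1 + 1) * u (-((n : ℕ) + 1 : ℕ) : ℤ)
      push_cast
      ring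
    have h := h1.sub h2
    rw [sub_zero] at h
    exact h
  -- telescoping identity
  have hkey : ∀ n : ℕ, c * a n = G (n + 1) - G n := by
    intro n
    have hj : (-(n + 1 : ℤ)) ≤ -1 := by omega
    have hr := hrec (-(n + 1 : ℤ)) hj
    have e1 : (-(n + 1 : ℤ)) - 1 = -((n : ℤ) + 2) := by ring
    have e2 : (-(n + 1 : ℤ)) + 1 = -(n : ℤ) := by ring
    rw [e1, e2] at hr
    have key : c * a n = θ ^ (n + 1) * ((u (-(n + 1 : ℤ))) ^ k * c) := by
      simp only [ha]; ring
    rw [key, hr, hτ]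
    simp only [hG]
    push_cast
    have e3 : (-((n : ℤ) + 1 + 1)) = -((n : ℤ) + 2) := by ring
    rw [e3]
    have hθne : θ ≠ 0 := ne_of_gt hθ
    field_simp
    ring
  -- partial sums
  have hpart : ∀ N : ℕ, ∑ n ∈ Finset.range N, c * a n = G N - G 0 := by
    intro N
    rw [Finset.sum_congr rfl (fun n _ => hkey n)]
    exact Finset.sum_range_sub G N
  have hGzero : G 0 = u (-1) - θ := by simp [hG, hu0]
  -- limit comparison
  have h1 : Filter.Tendsto (fun N => ∑ n ∈ Finset.range N, c * a n) Filter.atTop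
      (nhds (c * ∑' j, a j)) := by
    have := (hsum.hasSum.mul_left c).tendsto_sum_nat
    exact this
  have h2 : Filter.Tendsto (fun N => ∑ n ∈ Finset.range N, c * a n) Filter.atTop
      (nhds (θ - u (-1))) := by
    have : (fun N => ∑ n ∈ Finset.range N, c * a n) = fun N => G N - G 0 := by
      funext N; exact hpart N
    rw [this, hGzero]
    have := hG0.sub (tendsto_const_nhds (x := u (-1) - θ))
    simpa using this
  have hlim : c * ∑' j, a j = θ - u (-1) := tendsto_nhds_unique h1 h2
  field_simp [hc] at hlim ⊢
  linarith [hlim]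
end

section
/- For the 4-periodic boundary law system with $k = 2$: if $2 < \tau \leq 4$, the only solution with $a, b > 0$ to $(a+b-\tau)b^2 + \tau b - 2 = 0$ and $(a+b-\tau)a^2 + \tau a - 2 = 0$ is $a = b = 1$. -/
/-!
Subtracting the two equations gives `(b - a) * (s ^ 2 - τ s + τ) = 0` with `s = a + b`.
If `a = b`, the equation factors as `(a - 1) (2a² + (2 - τ) a + 2) = 0`, and the quadratic factor
has negative discriminant for `-2 < τ < 6`. Otherwise `(2s - τ)² = τ (τ - 4) ≤ 0`, which forces
`τ = 4` and `s = 2`, and then the second equation reads `-2 (a - 1)² = 0`.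
-/

lemma eq_one_of_two_mul_sub_mul_sq_add_eq_zero {τ a : ℝ} (hτ₁ : -2 < τ) (hτ₂ : τ < 6)
    (h : (2 * a - τ) * a ^ 2 + τ * a - 2 = 0) : a = 1 := by
  have hfactor : (a - 1) * (2 * a ^ 2 + (2 - τ) * a + 2) = 0 := by linear_combination h
  have hquad : 0 < 2 * a ^ 2 + (2 - τ) * a + 2 := by
    nlinarith [sq_nonneg (4 * a + (2 - τ)), mul_pos (sub_pos.2 hτ₁) (sub_pos.2 hτ₂)]
  linarith [sub_eq_zero.mp ((mul_eq_zero.mp hfactor).resolve_right hquad.ne')]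

lemma eq_four_and_eq_two_of_sq_sub_mul_add_eq_zero {τ s : ℝ} (hτ₁ : 0 < τ) (hτ₂ : τ ≤ 4)
    (h : s ^ 2 - τ * s + τ = 0) : τ = 4 ∧ s = 2 := by
  have hsq : (2 * s - τ) ^ 2 = τ * (τ - 4) := by linear_combination 4 * h
  have hprod : τ * (τ - 4) = 0 :=
    le_antisymm (mul_nonpos_of_nonneg_of_nonpos hτ₁.le (by linarith)) (hsq ▸ sq_nonneg _)
  have hτ : τ = 4 := by linarith [sub_eq_zero.mp ((mul_eq_zero.mp hprod).resolve_left hτ₁.ne')]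
  have hs : 2 * s - τ = 0 := pow_eq_zero_iff two_ne_zero |>.mp (hsq.trans (by rw [hprod]))
  exact ⟨hτ, by linarith⟩

theorem stmt_19_general (τ a b : ℝ) (hτ₁ : 2 < τ) (hτ₂ : τ ≤ 4)
    (h1 : (a + b - τ) * b ^ 2 + τ * b - 2 = 0)
    (h2 : (a + b - τ) * a ^ 2 + τ * a - 2 = 0) :
    a = 1 ∧ b = 1 := by
  have hdiff : (b - a) * ((a + b) ^ 2 - τ * (a + b) + τ) = 0 := by linear_combination h1 - h2
  rcases mul_eq_zero.mp hdiff with hab | hsum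
  · obtain rfl : b = a := sub_eq_zero.mp hab
    have hb : b = 1 := eq_one_of_two_mul_sub_mul_sq_add_eq_zero (τ := τ) (by linarith) (by linarith)
      (by linear_combination h2)
    exact ⟨hb, hb⟩
  · obtain ⟨rfl, hs⟩ := eq_four_and_eq_two_of_sq_sub_mul_add_eq_zero (by linarith) hτ₂ hsum
    have hsq : (a - 1) ^ 2 = 0 := by linear_combination (-1 / 2) * h2 + (a ^ 2 / 2) * hs
    have ha : a = 1 := sub_eq_zero.mp (pow_eq_zero_iff two_ne_zero |>.mp hsq)
    exact ⟨ha, by linarith⟩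

theorem stmt_19 (τ a b : ℝ) (hτ₁ : 2 < τ) (hτ₂ : τ ≤ 4) (ha : 0 < a) (hb : 0 < b)
    (h1 : (a + b - τ) * b ^ 2 + τ * b - 2 = 0)
    (h2 : (a + b - τ) * a ^ 2 + τ * a - 2 = 0) :
    a = 1 ∧ b = 1 :=
  stmt_19_general τ a b hτ₁ hτ₂ h1 h2
end
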